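/- The critical group of the octahedron graph (the 1-skeleton of the regular octahedron, equivalently K_{2,2,2}, equivalently the circulant graph C₆^{1,2}) is isomorphic to ℤ/3ℤ ⊕ ℤ/2ℤ ⊕ (ℤ/8ℤ)², a group of order 384. -/
import Mathlib


open Finset

/-- The degree (total sum) homomorphism on divisors of a graph with `n` vertices. -/
def degSum (n : ℕ) : (Fin n → ℤ) →+ ℤ :=
  AddMonoidHom.mk' (fun f => ∑ v, f v) (by
    intro f g
    simp [Finset.sum_add_distrib])

/-- The divisor obtained by firing the vertex `v` of the graph with adjacency
matrix `A`: it has value `-deg v` at `v` and value `A v w` at every `w ≠ v`. -/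
def firing {n : ℕ} (A : Matrix (Fin n) (Fin n) ℕ) (v : Fin n) : Fin n → ℤ :=
  fun w => if w = v then -(∑ u, (A v u : ℤ)) else (A v w : ℤ)

/-- The critical group (Jacobian) of the graph with adjacency matrix `A`:
degree-zero divisors modulo the subgroup generated by the firing divisors. -/
def criticalGroup {n : ℕ} (A : Matrix (Fin n) (Fin n) ℕ) :=
  (degSum n).ker ⧸
    (AddSubgroup.closure (Set.range (firing A))).addSubgroupOf (degSum n).ker

noncomputable instance {n : ℕ} (A : Matrix (Fin n) (Fin n) ℕ) :
    AddCommGroup (criticalGroup A) :=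
  QuotientAddGroup.Quotient.addCommGroup _


/-- The adjacency matrix of the octahedron graph: a 4-cycle `0 1 2 3` together
with two vertices `4, 5` each adjacent to all of `0,1,2,3`. -/
def octahedron : Matrix (Fin 6) (Fin 6) ℕ :=
  !![0,1,0,1,1,1;
     1,0,1,0,1,1;
     0,1,0,1,1,1;
     1,0,1,0,1,1;
     1,1,1,1,0,0;
     1,1,1,1,0,0]

/-! ### Auxiliary material -/

lemma cons_val_two' {α : Type*} (a b c d e f : α) : (![a,b,c,d,e,f] : Fin 6 → α) 2 = c := rfl
lemma cons_val_three' {α : Type*} (a b c d e f : α) : (![a,b,c,d,e,f] : Fin 6 → α) 3 = d := rfl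
lemma cons_val_four' {α : Type*} (a b c d e f : α) : (![a,b,c,d,e,f] : Fin 6 → α) 4 = e := rfl
lemma cons_val_five' {α : Type*} (a b c d e f : α) : (![a,b,c,d,e,f] : Fin 6 → α) 5 = f := rfl

def lin6 (c : Fin 6 → ℤ) : (Fin 6 → ℤ) →+ ℤ :=
  AddMonoidHom.mk' (fun x => ∑ i, c i * x i) (by
    intro f g
    simp [mul_add, Finset.sum_add_distrib])

def cc2 : Fin 6 → ℤ := ![0,-1,-5,0,1,0]
def cc3 : Fin 6 → ℤ := ![0,-7,-34,1,6,0]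
def cc4 : Fin 6 → ℤ := ![1,-4,-23,2,6,0]

def Phi : (Fin 6 → ℤ) →+ (ZMod 3 × ZMod 2 × ZMod 8 × ZMod 8) :=
  ((Int.castAddHom (ZMod 3)).comp (lin6 cc4)).prod
    (((Int.castAddHom (ZMod 2)).comp (lin6 cc2)).prod
      (((Int.castAddHom (ZMod 8)).comp (lin6 cc3)).prod
        ((Int.castAddHom (ZMod 8)).comp (lin6 cc4))))

lemma F0 : firing octahedron 0 = ![-4,1,0,1,1,1] := by decide
lemma F1 : firing octahedron 1 = ![1,-4,1,0,1,1] := by decide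
lemma F3 : firing octahedron 3 = ![1,0,1,-4,1,1] := by decide
lemma F4 : firing octahedron 4 = ![1,1,1,1,-4,0] := by decide
lemma F5 : firing octahedron 5 = ![1,1,1,1,0,-4] := by decide

lemma firing_mem (v : Fin 6) : firing octahedron v ∈ Phi.ker := by
  fin_cases v <;> decide

lemma closure_le_kerPhi :
    AddSubgroup.closure (Set.range (firing octahedron)) ≤ Phi.ker := by
  rw [AddSubgroup.closure_le]
  rintro _ ⟨v, rfl⟩
  exact firing_mem v

lemma mem_closure_of (x : Fin 6 → ℤ) (hd0 : degSum 6 x = 0) (hPhi : Phi x = 0) :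
    x ∈ AddSubgroup.closure (Set.range (firing octahedron)) := by
  have hd : ∑ v, x v = 0 := hd0
  rw [Fin.sum_univ_six] at hd
  have h4 : ((∑ i, cc4 i * x i : ℤ) : ZMod 3) = 0 := congrArg Prod.fst hPhi
  have h2 : ((∑ i, cc2 i * x i : ℤ) : ZMod 2) = 0 := congrArg (fun p => p.2.1) hPhi
  have h3 : ((∑ i, cc3 i * x i : ℤ) : ZMod 8) = 0 := congrArg (fun p => p.2.2.1) hPhi
  have h4' : ((∑ i, cc4 i * x i : ℤ) : ZMod 8) = 0 := congrArg (fun p => p.2.2.2) hPhi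
  rw [ZMod.intCast_zmod_eq_zero_iff_dvd] at h2 h3 h4 h4'
  rw [Fin.sum_univ_six] at h2 h3 h4 h4'
  simp only [cc2, cc3, cc4, Matrix.cons_val_zero, Matrix.cons_val_one, Matrix.head_cons,
    cons_val_two', cons_val_three', cons_val_four', cons_val_five'] at h2 h3 h4 h4'
  obtain ⟨k2, hk2⟩ : (2:ℤ) ∣ (-x 1 - 5 * x 2 + x 4) := by
    obtain ⟨k, hk⟩ := h2; exact ⟨k, by omega⟩
  obtain ⟨k3, hk3⟩ : (8:ℤ) ∣ (-7 * x 1 - 34 * x 2 + x 3 + 6 * x 4) := by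
    obtain ⟨k, hk⟩ := h3; exact ⟨k, by omega⟩
  obtain ⟨k4, hk4⟩ : (24:ℤ) ∣ (x 0 - 4 * x 1 - 23 * x 2 + 2 * x 3 + 6 * x 4) := by
    obtain ⟨ka, hka⟩ := h4; obtain ⟨kb, hkb⟩ := h4'
    have : (3:ℤ) ∣ (x 0 - 4 * x 1 - 23 * x 2 + 2 * x 3 + 6 * x 4) := ⟨ka, by omega⟩
    have : (8:ℤ) ∣ (x 0 - 4 * x 1 - 23 * x 2 + 2 * x 3 + 6 * x 4) := ⟨kb, by omega⟩
    omega
  have hx : x = (x 1 + 4 * x 2 - 3*k2 + 4*k3 - 6*k4) • firing octahedron 0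
      + (x 2 - k2 + k3 - k4) • firing octahedron 1
      + (2*k2 - k3 - k4) • firing octahedron 3
      + (-k2 + k3 - 2*k4) • firing octahedron 4
      + (-k3 + 4*k4) • firing octahedron 5 := by
    rw [F0, F1, F3, F4, F5]
    funext w
    fin_cases w <;>
      simp [cons_val_two', cons_val_three', cons_val_four', cons_val_five'] <;>
      omega
  have hmem : ∀ v : Fin 6, firing octahedron v ∈
      AddSubgroup.closure (Set.range (firing octahedron)) :=
    fun v => AddSubgroup.subset_closure ⟨v, rfl⟩
  rw [hx]
  exact add_mem (add_mem (add_mem (add_mem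
    (AddSubgroup.zsmul_mem _ (hmem 0) _) (AddSubgroup.zsmul_mem _ (hmem 1) _))
    (AddSubgroup.zsmul_mem _ (hmem 3) _)) (AddSubgroup.zsmul_mem _ (hmem 4) _))
    (AddSubgroup.zsmul_mem _ (hmem 5) _)

def psi : (degSum 6).ker →+ (ZMod 3 × ZMod 2 × ZMod 8 × ZMod 8) :=
  Phi.comp (degSum 6).ker.subtype

lemma W2_mem : (![6,0,0,-6,1,-1] : Fin 6 → ℤ) ∈ (degSum 6).ker := by decide
lemma W3_mem : (![-2,0,0,1,0,1] : Fin 6 → ℤ) ∈ (degSum 6).ker := by decide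
lemma W4_mem : (![1,0,0,0,0,-1] : Fin 6 → ℤ) ∈ (degSum 6).ker := by decide

lemma PhiW2 : Phi ![6,0,0,-6,1,-1] = (0,1,0,0) := by decide
lemma PhiW3 : Phi ![-2,0,0,1,0,1] = (0,0,1,0) := by decide
lemma PhiW4 : Phi ![1,0,0,0,0,-1] = (1,0,0,1) := by decide

lemma psi_surjective : Function.Surjective psi := by
  rintro ⟨a, b, c, d⟩
  obtain ⟨a', rfl⟩ := ZMod.intCast_surjective a
  obtain ⟨b', rfl⟩ := ZMod.intCast_surjective b
  obtain ⟨c', rfl⟩ := ZMod.intCast_surjective c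
  obtain ⟨d', rfl⟩ := ZMod.intCast_surjective d
  refine ⟨⟨(16*a' + 9*d') • ![1,0,0,0,0,-1] + b' • ![6,0,0,-6,1,-1] + c' • ![-2,0,0,1,0,1],
    ?_⟩, ?_⟩
  · exact add_mem (add_mem (AddSubgroup.zsmul_mem _ W4_mem _)
      (AddSubgroup.zsmul_mem _ W2_mem _)) (AddSubgroup.zsmul_mem _ W3_mem _)
  · show Phi ((16*a' + 9*d') • ![1,0,0,0,0,-1] + b' • ![6,0,0,-6,1,-1]
        + c' • ![-2,0,0,1,0,1]) = _
    rw [map_add, map_add, map_zsmul, map_zsmul, map_zsmul, PhiW2, PhiW3, PhiW4]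
    refine Prod.ext ?_ (Prod.ext ?_ (Prod.ext ?_ ?_)) <;>
      simp [Prod.smul_def, zsmul_eq_mul] <;>
      push_cast <;>
      ring_nf <;>
      first
        | (rw [show (16:ZMod 3) = 1 by decide, show (9:ZMod 3) = 0 by decide]; ring)
        | (rw [show (16:ZMod 8) = 0 by decide, show (9:ZMod 8) = 1 by decide]; ring)
        | skip

lemma ker_psi_eq :
    psi.ker = (AddSubgroup.closure (Set.range (firing octahedron))).addSubgroupOf
      (degSum 6).ker := by
  ext ⟨x, hx⟩
  rw [AddMonoidHom.mem_ker, AddSubgroup.mem_addSubgroupOf]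
  constructor
  · intro h
    exact mem_closure_of x hx h
  · intro h
    exact closure_le_kerPhi h

theorem stmt_17 :
    Nonempty (criticalGroup octahedron ≃+
      (ZMod 3 × ZMod 2 × ZMod 8 × ZMod 8)) := by
  refine ⟨AddEquiv.trans ?_ (QuotientAddGroup.quotientKerEquivOfSurjective psi psi_surjective)⟩
  exact QuotientAddGroup.quotientAddEquivOfEq ker_psi_eq.symm
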